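/- Every nonzero multiplicative linear functional ω on the Banach algebra C_r(𝕋ⁿ) maps each generator T_{e_i} into the unit circle; consequently every such ω is given by a point evaluation on 𝕋ⁿ composed with the symbol map, and the maximal ideal space of C_r(𝕋ⁿ) is 𝕋ⁿ. -/

import Mathlib

/-!
A shift by `a` changes the weight `1 / E(p)` of `L²_r` by at most the factor `1 + ‖a‖ / m`
(because `E` is `1`-Lipschitz and `E ≥ m`), so `‖T_a‖ ≤ √(1 + ‖a‖ / m)`. A character `ω` of the
Banach algebra `C_r(𝕋ⁿ)` is contractive, hence `|ω(T_a)|ᵏ = |ω(T_{ka})| ≤ √(1 + k‖a‖ / m)` for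
all `k`, which forces `|ω(T_a)| ≤ 1`; applied to `T_{-a} = T_a⁻¹` this gives `|ω(T_a)| = 1`.
Thus `a ↦ ω(T_a)` is a unitary character of `ℤⁿ`, i.e. `a ↦ e^{i a·x}` for some `x ∈ ℝⁿ`.
-/

open MeasureTheory FourierTransform

noncomputable section

/-- The relativistic energy `E(p) = √(|p|² + m²)`. -/
def energy {n : ℕ} (m : ℝ) (p : EuclideanSpace ℝ (Fin n)) : ℝ :=
  Real.sqrt (‖p‖ ^ 2 + m ^ 2)

/-- The measure `dp/E(p)` on `ℝⁿ`, so `L²_r(ℝⁿ) = L²(μᵣ)`. -/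
def rMeasure {n : ℕ} (m : ℝ) : Measure (EuclideanSpace ℝ (Fin n)) :=
  volume.withDensity fun p => ENNReal.ofReal (1 / energy m p)

/-- The relativistic momentum Hilbert space `L²_r(ℝⁿ)`. -/
abbrev L2r (n : ℕ) (m : ℝ) := Lp ℂ 2 (rMeasure (n := n) m)

/-- `T` is (a bounded realization of) the translation `T_a φ(p) = φ(p−a)` on `L²_r(ℝⁿ)`. -/
def IsTransl {n : ℕ} (m : ℝ) (a : EuclideanSpace ℝ (Fin n))
    (T : L2r n m →L[ℂ] L2r n m) : Prop :=
  ∀ φ : L2r n m, (T φ : EuclideanSpace ℝ (Fin n) → ℂ) =ᵐ[rMeasure m] fun p => φ (p - a)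

/-- `L^∞_r(ℝⁿ)`: the commutant of the translations in `B(L²_r(ℝⁿ))`. -/
def Linftyr (n : ℕ) (m : ℝ) : Set (L2r n m →L[ℂ] L2r n m) :=
  {A | ∀ (a : EuclideanSpace ℝ (Fin n)) (T : L2r n m →L[ℂ] L2r n m),
    IsTransl m a T → A.comp T = T.comp A}

/-- `g` is the symbol of `A ∈ B(L²_r(ℝⁿ))`: the restriction of `A` to `L²(ℝⁿ)` acts as
multiplication by `g` in the position (inverse Fourier) picture, i.e. `A ψ̂ = (g·ψ)^`
for ψ in the dense class `L¹ ∩ L²`. -/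
def IsSymbol {n : ℕ} (m : ℝ) (A : L2r n m →L[ℂ] L2r n m)
    (g : EuclideanSpace ℝ (Fin n) → ℂ) : Prop :=
  ∀ ψ : EuclideanSpace ℝ (Fin n) → ℂ, Integrable ψ → MemLp ψ 2 volume →
    ∀ φ : L2r n m, (φ : EuclideanSpace ℝ (Fin n) → ℂ) =ᵐ[volume] 𝓕 ψ →
      (A φ : EuclideanSpace ℝ (Fin n) → ℂ) =ᵐ[volume] 𝓕 fun x => g x * ψ x

/-- The Banach algebra `C_r(𝕋ⁿ)`: the operator-norm closure in `B(L²_r(ℝⁿ))` of the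
(algebraic) span of the integer translations `T_a`, `a ∈ ℤⁿ` (which is the algebra they
generate, since `T_a T_b = T_{a+b}` and `T_0 = 1`). -/
def CrTorus (n : ℕ) (m : ℝ) : Subalgebra ℂ (L2r n m →L[ℂ] L2r n m) :=
  (Algebra.adjoin ℂ
    {T | ∃ a : Fin n → ℤ,
      IsTransl m ((WithLp.equiv 2 (Fin n → ℝ)).symm fun i => (a i : ℝ)) T}).topologicalClosure

open scoped ENNReal

namespace MeasureTheory

variable {α β E : Type*} [MeasurableSpace α] [MeasurableSpace β] [NormedAddCommGroup E]
  {p : ℝ≥0∞} {μ : Measure α} {ν : Measure β} {f : α → β} {c : ℝ≥0∞}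

theorem Measure.QuasiMeasurePreserving.of_map_le_smul (hf : Measurable f)
    (h : μ.map f ≤ c • ν) : Measure.QuasiMeasurePreserving f μ ν :=
  ⟨hf, (Measure.absolutelyContinuous_of_le h).trans Measure.smul_absolutelyContinuous⟩

theorem eLpNorm_comp_le_of_map_le (hf : Measurable f) (h : μ.map f ≤ c • ν) (hp : p ≠ ∞)
    {g : β → E} (hg : AEStronglyMeasurable g ν) :
    eLpNorm (g ∘ f) p μ ≤ c ^ (1 / p).toReal * eLpNorm g p ν := by
  rw [← eLpNorm_map_measure
    (hg.mono_ac (Measure.QuasiMeasurePreserving.of_map_le_smul hf h).absolutelyContinuous)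
    hf.aemeasurable]
  calc eLpNorm g p (μ.map f) ≤ eLpNorm g p (c • ν) := eLpNorm_mono_measure g h
    _ = c ^ (1 / p).toReal * eLpNorm g p ν := eLpNorm_smul_measure_of_ne_top hp g c

theorem MemLp.comp_of_map_le {g : β → E} (hg : MemLp g p ν) (hf : Measurable f)
    (h : μ.map f ≤ c • ν) (hc : c ≠ ∞) (hp : p ≠ ∞) : MemLp (g ∘ f) p μ :=
  ⟨hg.1.comp_quasiMeasurePreserving (Measure.QuasiMeasurePreserving.of_map_le_smul hf h),
    (eLpNorm_comp_le_of_map_le hf h hp hg.1).trans_lt <|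
      ENNReal.mul_lt_top (ENNReal.rpow_lt_top_of_nonneg ENNReal.toReal_nonneg hc) hg.2⟩

namespace Lp

variable (𝕜 : Type*) [NontriviallyNormedField 𝕜] [NormedSpace 𝕜 E] [Fact (1 ≤ p)]

def compOfMapLE (hf : Measurable f) (h : μ.map f ≤ c • ν) (hc : c ≠ ∞) (hp : p ≠ ∞) :
    Lp E p ν →L[𝕜] Lp E p μ :=
  LinearMap.mkContinuous
    { toFun g := ⟨g.1.compQuasiMeasurePreserving f (.of_map_le_smul hf h), by
        rw [Lp.mem_Lp_iff_memLp]
        exact ((Lp.memLp g).comp_of_map_le hf h hc hp).ae_eq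
          (AEEqFun.coeFn_compQuasiMeasurePreserving _ _).symm⟩
      map_add' := by rintro ⟨⟨_⟩, _⟩ ⟨⟨_⟩, _⟩; rfl
      map_smul' := by rintro _ ⟨⟨_⟩, _⟩; rfl }
    (c ^ (1 / p).toReal).toReal fun g => by
      rw [Lp.norm_def, Lp.norm_def, ← ENNReal.toReal_mul]
      refine ENNReal.toReal_mono (ENNReal.mul_ne_top
        (ENNReal.rpow_ne_top_of_nonneg ENNReal.toReal_nonneg hc) (Lp.eLpNorm_ne_top g)) ?_
      exact (eLpNorm_congr_ae (AEEqFun.coeFn_compQuasiMeasurePreserving g.1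
        (.of_map_le_smul hf h))).trans_le
        (eLpNorm_comp_le_of_map_le hf h hp (Lp.aestronglyMeasurable g))

theorem norm_compOfMapLE_le (hf : Measurable f) (h : μ.map f ≤ c • ν) (hc : c ≠ ∞)
    (hp : p ≠ ∞) : ‖(compOfMapLE 𝕜 hf h hc hp : Lp E p ν →L[𝕜] Lp E p μ)‖ ≤
      (c ^ (1 / p).toReal).toReal :=
  LinearMap.mkContinuous_norm_le _ ENNReal.toReal_nonneg _

theorem coeFn_compOfMapLE (hf : Measurable f) (h : μ.map f ≤ c • ν) (hc : c ≠ ∞) (hp : p ≠ ∞)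
    (g : Lp E p ν) : compOfMapLE 𝕜 hf h hc hp g =ᵐ[μ] g ∘ f :=
  AEEqFun.coeFn_compQuasiMeasurePreserving _ (.of_map_le_smul hf h)

end Lp

end MeasureTheory

section Translation

variable {n : ℕ} {m : ℝ}

theorem le_energy (m : ℝ) (p : EuclideanSpace ℝ (Fin n)) : m ≤ energy m p :=
  (le_abs_self m).trans (Real.abs_le_sqrt (by nlinarith [sq_nonneg ‖p‖]))

theorem energy_le_energy_add_norm_sub (m : ℝ) (p q : EuclideanSpace ℝ (Fin n)) :
    energy m p ≤ energy m q + ‖p - q‖ := by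
  have hq : energy m q ^ 2 = ‖q‖ ^ 2 + m ^ 2 := Real.sq_sqrt (by positivity)
  have hq_le : ‖q‖ ≤ energy m q := Real.le_sqrt_of_sq_le (by nlinarith [sq_nonneg m])
  have hpq : ‖p‖ ≤ ‖q‖ + ‖p - q‖ := norm_le_norm_add_norm_sub' p q
  refine Real.sqrt_le_iff.mpr ⟨add_nonneg (Real.sqrt_nonneg _) (norm_nonneg _), ?_⟩
  nlinarith [norm_nonneg p, norm_nonneg q, norm_nonneg (p - q)]

theorem energy_le_mul_energy_add (hm : 0 < m) (p a : EuclideanSpace ℝ (Fin n)) :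
    energy m p ≤ (1 + ‖a‖ / m) * energy m (p + a) := by
  have h := energy_le_energy_add_norm_sub m p (p + a)
  rw [sub_add_cancel_left, norm_neg] at h
  have : ‖a‖ ≤ ‖a‖ / m * energy m (p + a) := by
    rw [div_mul_eq_mul_div, le_div_iff₀ hm]
    exact mul_le_mul_of_nonneg_left (le_energy m _) (norm_nonneg a)
  linarith

theorem energy_pos (hm : 0 < m) (p : EuclideanSpace ℝ (Fin n)) : 0 < energy m p :=
  hm.trans_le (le_energy m p)

theorem measurable_energy (m : ℝ) : Measurable (energy (n := n) m) := by
  unfold energy; fun_prop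

theorem map_sub_rMeasure_le (hm : 0 < m) (a : EuclideanSpace ℝ (Fin n)) :
    (rMeasure m).map (· - a) ≤ ENNReal.ofReal (1 + ‖a‖ / m) • rMeasure m := by
  have hw : Measurable fun p : EuclideanSpace ℝ (Fin n) => ENNReal.ofReal (1 / energy m p) :=
    ENNReal.measurable_ofReal.comp (measurable_const.div (measurable_energy m))
  rw [Measure.le_iff]
  intro s hs
  rw [Measure.map_apply (measurable_sub_const a) hs, Measure.smul_apply, smul_eq_mul, rMeasure,
    withDensity_apply _ (hs.preimage (measurable_sub_const a)), withDensity_apply _ hs,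
    ← lintegral_const_mul _ hw]
  calc ∫⁻ p in (· - a) ⁻¹' s, ENNReal.ofReal (1 / energy m p)
      = ∫⁻ q in s, ENNReal.ofReal (1 / energy m (q + a)) := by
        simpa using (measurePreserving_sub_right volume a).setLIntegral_comp_preimage hs
          (hw.comp (measurable_add_const a))
    _ ≤ ∫⁻ q in s, ENNReal.ofReal (1 + ‖a‖ / m) * ENNReal.ofReal (1 / energy m q) := by
        refine setLIntegral_mono (by fun_prop) fun q _ => ?_
        rw [← ENNReal.ofReal_mul (by positivity), mul_one_div]
        refine ENNReal.ofReal_le_ofReal ?_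
        rw [div_le_div_iff₀ (energy_pos hm _) (energy_pos hm _), one_mul]
        exact energy_le_mul_energy_add hm q a

theorem quasiMeasurePreserving_sub_rMeasure (hm : 0 < m) (a : EuclideanSpace ℝ (Fin n)) :
    Measure.QuasiMeasurePreserving (· - a) (rMeasure m) (rMeasure m) :=
  .of_map_le_smul (measurable_sub_const a) (map_sub_rMeasure_le hm a)

def translation (hm : 0 < m) (a : EuclideanSpace ℝ (Fin n)) : L2r n m →L[ℂ] L2r n m :=
  Lp.compOfMapLE ℂ (measurable_sub_const a) (map_sub_rMeasure_le hm a) ENNReal.ofReal_ne_top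
    ENNReal.ofNat_ne_top

theorem isTransl_translation (hm : 0 < m) (a : EuclideanSpace ℝ (Fin n)) :
    IsTransl m a (translation hm a) :=
  Lp.coeFn_compOfMapLE ℂ _ _ _ _

theorem norm_translation_le (hm : 0 < m) (a : EuclideanSpace ℝ (Fin n)) :
    ‖translation hm a‖ ≤ √(1 + ‖a‖ / m) := by
  refine (Lp.norm_compOfMapLE_le ℂ _ _ _ _).trans_eq ?_
  rw [← ENNReal.toReal_rpow, ENNReal.toReal_ofReal (by positivity), Real.sqrt_eq_rpow]
  norm_num

theorem IsTransl.eq {a : EuclideanSpace ℝ (Fin n)} {T S : L2r n m →L[ℂ] L2r n m}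
    (hT : IsTransl m a T) (hS : IsTransl m a S) : T = S :=
  ContinuousLinearMap.ext fun φ => Lp.ext ((hT φ).trans (hS φ).symm)

theorem isTransl_zero_one : IsTransl m (0 : EuclideanSpace ℝ (Fin n)) 1 := fun φ => by
  simp

theorem IsTransl.mul (hm : 0 < m) {a b : EuclideanSpace ℝ (Fin n)}
    {T S : L2r n m →L[ℂ] L2r n m} (hT : IsTransl m a T) (hS : IsTransl m b S) :
    IsTransl m (a + b) (T * S) := fun φ => by
  refine (hT (S φ)).trans ?_
  simpa [Function.comp_def, sub_sub] using (quasiMeasurePreserving_sub_rMeasure hm a).ae_eq (hS φ)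

end Translation

/-- Bernoulli: for `r > 1`, `r ^ k ≥ 1 + k (r - 1)` eventually exceeds `√(1 + k c)`. -/
theorem le_one_of_forall_pow_le_sqrt {r c : ℝ} (h : ∀ k : ℕ, r ^ k ≤ √(1 + k * c)) : r ≤ 1 := by
  by_contra! hr
  obtain ⟨k, hk⟩ := exists_nat_gt (c / (r - 1) ^ 2)
  have hk' : c < (k + 1) * (r - 1) ^ 2 := by
    rw [div_lt_iff₀ (by nlinarith)] at hk
    nlinarith
  have hbern : 1 + ((k + 1 : ℕ) : ℝ) * (r - 1) ≤ r ^ (k + 1) :=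
    one_add_mul_sub_le_pow (by linarith) _
  have hsq := (Real.le_sqrt' (by positivity)).mp (hbern.trans (h (k + 1)))
  push_cast at hsq
  nlinarith

namespace AddChar

variable {A K : Type*} [AddGroup A] [NormedDivisionRing K]

theorem norm_eq_one_of_norm_nsmul_le_sqrt (ψ : AddChar A K) (c : A → ℝ)
    (h : ∀ a (k : ℕ), ‖ψ (k • a)‖ ≤ √(1 + k * c a)) (a : A) : ‖ψ a‖ = 1 := by
  have hle (b : A) : ‖ψ b‖ ≤ 1 :=
    le_one_of_forall_pow_le_sqrt fun k => by simpa [map_nsmul_eq_pow] using h b k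
  have hinv : ‖ψ a‖ * ‖ψ (-a)‖ = 1 := by
    rw [← norm_mul, ← map_add_eq_mul, add_neg_cancel, map_zero_eq_one, norm_one]
  nlinarith [hle a, hle (-a), norm_nonneg (ψ a), norm_nonneg (ψ (-a))]

theorem exists_eq_exp_of_norm_eq_one {ι : Type*} [Fintype ι] [DecidableEq ι]
    (ψ : AddChar (ι → ℤ) ℂ) (h : ∀ i, ‖ψ (Pi.single i 1)‖ = 1) :
    ∃ x : ι → ℝ, ∀ a, ψ a = Complex.exp (Complex.I * ((∑ i, a i * x i : ℝ) : ℂ)) := by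
  choose x hx using fun i => (Complex.norm_eq_one_iff _).mp (h i)
  refine ⟨x, fun a => ?_⟩
  have hsum (f : ι → ι → ℤ) : ψ (∑ i, f i) = ∏ i, ψ (f i) := by
    have := map_prod ψ.toMonoidHom (fun i => Multiplicative.ofAdd (f i)) Finset.univ
    rwa [← ofAdd_sum] at this
  have hsingle (i : ι) : ψ (Pi.single i (a i)) = Complex.exp (a i * (x i * Complex.I)) := by
    rw [show (Pi.single i (a i) : ι → ℤ) = a i • (Pi.single i 1 : ι → ℤ) by
      rw [← Pi.single_smul', smul_eq_mul, mul_one], map_zsmul_eq_zpow, ← hx i, Complex.exp_int_mul]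
  conv_lhs => rw [← Finset.univ_sum_single a]
  rw [hsum, Finset.prod_congr rfl fun i _ => hsingle i, ← Complex.exp_sum]
  push_cast
  rw [Finset.mul_sum]
  congr 1
  exact Finset.sum_congr rfl fun i _ => by ring

end AddChar

theorem Subalgebra.norm_algHom_apply_le {𝕜 A : Type*} [NormedField 𝕜] [NormedRing A]
    [NormedAlgebra 𝕜 A] [CompleteSpace A] (S : Subalgebra 𝕜 A) (hS : IsClosed (S : Set A))
    (h1 : ‖(1 : A)‖ ≤ 1) (ω : S →ₐ[𝕜] 𝕜) (x : S) : ‖ω x‖ ≤ ‖x‖ :=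
  have : CompleteSpace S := hS.completeSpace_coe
  (AlgHom.norm_apply_le_self_mul_norm_one ω x).trans (mul_le_of_le_one_right (norm_nonneg x) h1)

section CrTorus

variable {n : ℕ} {m : ℝ}

def latticeEmbedding (n : ℕ) : (Fin n → ℤ) →+ EuclideanSpace ℝ (Fin n) where
  toFun a := (WithLp.equiv 2 (Fin n → ℝ)).symm fun i => (a i : ℝ)
  map_zero' := by ext; simp
  map_add' a b := by ext; simp

theorem latticeEmbedding_single (i : Fin n) :
    latticeEmbedding n (Pi.single i 1) = EuclideanSpace.single i 1 := by
  ext j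
  by_cases h : j = i <;> simp [latticeEmbedding, h]

theorem translation_mem_crTorus (hm : 0 < m) (a : Fin n → ℤ) :
    translation hm (latticeEmbedding n a) ∈ CrTorus n m :=
  Subalgebra.le_topologicalClosure _ (Algebra.subset_adjoin ⟨a, isTransl_translation hm _⟩)

def CrTorus.translationChar (hm : 0 < m) : AddChar (Fin n → ℤ) (CrTorus n m) where
  toFun a := ⟨translation hm (latticeEmbedding n a), translation_mem_crTorus hm a⟩
  map_zero_eq_one' := Subtype.ext <|
    (isTransl_translation hm _).eq (by simpa using isTransl_zero_one)
  map_add_eq_mul' a b := Subtype.ext <| (isTransl_translation hm _).eq <| by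
    rw [map_add]
    exact (isTransl_translation hm _).mul hm (isTransl_translation hm _)

theorem CrTorus.norm_algHom_apply_le (ω : CrTorus n m →ₐ[ℂ] ℂ) (A : CrTorus n m) :
    ‖ω A‖ ≤ ‖A‖ :=
  (CrTorus n m).norm_algHom_apply_le (Subalgebra.isClosed_topologicalClosure _)
    ContinuousLinearMap.norm_id_le ω A

end CrTorus

/-- every multiplicative linear functional (character) `ω` on `C_r(𝕋ⁿ)`
sends each generator `T_{e_i}` into the unit circle, and is given by evaluation at a
point of `𝕋ⁿ`: there is `x ∈ ℝⁿ` with `ω(T_a) = e^{i a·x}` for all `a ∈ ℤⁿ`; hence the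
maximal ideal space of `C_r(𝕋ⁿ)` is `𝕋ⁿ`. -/
theorem CrTorus_characters {n : ℕ} (m : ℝ) (hm : 0 < m)
    (ω : CrTorus n m →ₐ[ℂ] ℂ) :
    (∀ (i : Fin n) (T : L2r n m →L[ℂ] L2r n m) (hT : T ∈ CrTorus n m),
      IsTransl m (EuclideanSpace.single i 1) T → ‖ω ⟨T, hT⟩‖ = 1) ∧
    ∃ x : Fin n → ℝ, ∀ (a : Fin n → ℤ) (T : L2r n m →L[ℂ] L2r n m)
      (hT : T ∈ CrTorus n m),
      IsTransl m ((WithLp.equiv 2 (Fin n → ℝ)).symm fun i => (a i : ℝ)) T →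
      ω ⟨T, hT⟩ = Complex.exp (Complex.I * ((∑ i, a i * x i : ℝ) : ℂ)) := by
  set ψ := ω.toMonoidHom.compAddChar (CrTorus.translationChar hm)
  have hψ_apply (a : Fin n → ℤ) (T : L2r n m →L[ℂ] L2r n m) (hT : T ∈ CrTorus n m)
      (hTa : IsTransl m (latticeEmbedding n a) T) : ω ⟨T, hT⟩ = ψ a :=
    congrArg ω (Subtype.ext (hTa.eq (isTransl_translation hm _)))
  have hψ_norm (a : Fin n → ℤ) : ‖ψ a‖ = 1 := by
    refine ψ.norm_eq_one_of_norm_nsmul_le_sqrt (fun b => ‖latticeEmbedding n b‖ / m)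
      (fun a k => ?_) a
    calc ‖ψ (k • a)‖ ≤ ‖translation hm (latticeEmbedding n (k • a))‖ :=
          CrTorus.norm_algHom_apply_le ω _
      _ ≤ √(1 + ‖latticeEmbedding n (k • a)‖ / m) := norm_translation_le hm _
      _ = √(1 + k * (‖latticeEmbedding n a‖ / m)) := by
          rw [map_nsmul, RCLike.norm_nsmul ℝ, nsmul_eq_mul, mul_div_assoc]
  obtain ⟨x, hx⟩ := ψ.exists_eq_exp_of_norm_eq_one fun i => hψ_norm _
  refine ⟨fun i T hT hTi => ?_, x, fun a T hT hTa => (hψ_apply a T hT hTa).trans (hx a)⟩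
  rw [hψ_apply (Pi.single i 1) T hT (by rwa [latticeEmbedding_single]), hψ_norm]
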